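/- arXiv:math-ph/0001040 — 2 statements merged into one kernel-verified Lean document; each statement's English description precedes it below -/
import Mathlib

section
/- Let U ⊆ ℂ be open and let h : U → ℂ be holomorphic and nowhere vanishing on U. Then the complex-valued function D(z) = Real.log(|h(z)|²) is real-differentiable on U and its Wirtinger derivative satisfies ∂D(z) = h'(z)/h(z) for every z ∈ U. -/
/-- The Wirtinger derivative ∂F(p) = ½(DF(p)(1) − i·DF(p)(i)) of a function F : ℂ → ℂ,
where DF(p) is the real Fréchet derivative of F at p. -/
noncomputable def wirtinger (F : ℂ → ℂ) (p : ℂ) : ℂ :=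
  (1 / 2 : ℂ) * (fderiv ℝ F p 1 - Complex.I * fderiv ℝ F p Complex.I)

/-!
Away from the zeros of `h`, the real differential of `log ‖h‖²` is
`v ↦ 2 Re(conj h · h' v) / |h|² = 2 Re((h'/h) v)`, and the Wirtinger derivative of a real
function with differential `v ↦ 2 Re(a v)` is `½(2 Re a − i · 2 Re(i a)) = Re a + i Im a = a`.
-/

open Complex

/-- The differential of a real-valued function whose Wirtinger derivative is `a`. -/
noncomputable def twiceReMul (a : ℂ) : ℂ →L[ℝ] ℝ :=
  (2 : ℝ) • reCLM.comp (a • ContinuousLinearMap.id ℝ ℂ)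

@[simp]
theorem twiceReMul_apply (a v : ℂ) : twiceReMul a v = 2 * (a * v).re := by
  simp [twiceReMul]

theorem wirtinger_ofReal_of_hasFDerivAt {f : ℂ → ℝ} {p a : ℂ}
    (hf : HasFDerivAt f (twiceReMul a) p) : wirtinger (fun z => (f z : ℂ)) p = a := by
  have hF : HasFDerivAt (fun z => (f z : ℂ)) (ofRealCLM.comp (twiceReMul a)) p :=
    ofRealCLM.hasFDerivAt.comp p hf
  rw [wirtinger, hF.fderiv]
  apply Complex.ext <;> simp

theorem HasDerivAt.hasFDerivAt_log_norm_sq {g : ℂ → ℂ} {z a : ℂ} (hg : HasDerivAt g a z)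
    (hz : g z ≠ 0) :
    HasFDerivAt (fun w => Real.log (‖g w‖ ^ 2)) (twiceReMul (a / g z)) z := by
  refine ((hg.hasFDerivAt.restrictScalars ℝ).norm_sq.log (by positivity)).congr_fderiv ?_
  ext v
  simp only [twiceReMul_apply, FunLike.coe_smul, Pi.smul_apply, smul_eq_mul,
    ContinuousLinearMap.comp_apply, innerSL_apply_apply, Complex.inner,
    ContinuousLinearMap.coe_restrictScalars', ContinuousLinearMap.toSpanSingleton_apply,
    Complex.sq_norm, mul_re, mul_im, div_re, div_im, conj_re, conj_im]
  ring

/-- Let U ⊆ ℂ be open and let h be holomorphic and nowhere vanishing on U. Then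
D(z) = Real.log(|h(z)|²) is real-differentiable on U and its Wirtinger derivative
satisfies ∂D(z) = h'(z)/h(z) for every z ∈ U. -/
theorem stmt0 (U : Set ℂ) (hU : IsOpen U) (h : ℂ → ℂ)
    (hh : DifferentiableOn ℂ h U) (hne : ∀ z ∈ U, h z ≠ 0) :
    DifferentiableOn ℝ (fun z => (Real.log (‖h z‖ ^ 2) : ℂ)) U ∧
      ∀ z ∈ U, wirtinger (fun z => (Real.log (‖h z‖ ^ 2) : ℂ)) z
        = deriv h z / h z := by
  have hD (z : ℂ) (hz : z ∈ U) :
      HasFDerivAt (fun w => Real.log (‖h w‖ ^ 2)) (twiceReMul (deriv h z / h z)) z :=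
    ((hh z hz).differentiableAt (hU.mem_nhds hz)).hasDerivAt.hasFDerivAt_log_norm_sq (hne z hz)
  refine ⟨fun z hz => ?_, fun z hz => wirtinger_ofReal_of_hasFDerivAt (hD z hz)⟩
  exact (ofRealCLM.differentiableAt.comp z (hD z hz).differentiableAt).differentiableWithinAt
end

section
/- Let U, V ⊆ ℂ be open, let ψ₁ : U → V and ψ₂ : V → ℂ be holomorphic with nowhere vanishing derivatives. Then the composition ψ₂ ∘ ψ₁ has nowhere vanishing derivative on U and, for every (z,y) ∈ U × ℂ, δ₁(ψ₂∘ψ₁)(z,y) = δ₁(ψ₂)(Ψ₁(z,y)) + δ₁(ψ₁)(z,y). (This is the group 1-cocycle property of δ₁ underlying the primitivity of the coproduct Δδ₁ = 1⊗δ₁ + δ₁⊗1.) -/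
/-! Differentiating the chain rule `(ψ₂ ∘ ψ₁)' = (ψ₂' ∘ ψ₁) · ψ₁'` once more gives
`(ψ₂ ∘ ψ₁)'' = (ψ₂'' ∘ ψ₁) · ψ₁'² + (ψ₂' ∘ ψ₁) · ψ₁''`; dividing by `(ψ₂ ∘ ψ₁)'` splits
`y (ψ₂ ∘ ψ₁)'' / (ψ₂ ∘ ψ₁)'` into `(ψ₁' y) ψ₂''(ψ₁ z) / ψ₂'(ψ₁ z) + y ψ₁'' / ψ₁'`. -/

/-- The lift of ψ to the frame bundle: Ψ(z,y) = (ψ(z), ψ'(z)·y). -/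
noncomputable def liftF (ψ : ℂ → ℂ) : ℂ × ℂ → ℂ × ℂ :=
  fun p => (ψ p.1, deriv ψ p.1 * p.2)

/-- δ₁(ψ)(z,y) = y·ψ''(z)/ψ'(z). -/
noncomputable def delta1 (ψ : ℂ → ℂ) : ℂ × ℂ → ℂ :=
  fun p => p.2 * (deriv (deriv ψ) p.1 / deriv ψ p.1)

open Filter Topology

section SecondDerivative

variable {𝕜 : Type*} [NontriviallyNormedField 𝕜] {f g : 𝕜 → 𝕜} {z : 𝕜}

theorem deriv_deriv_comp (hg : ∀ᶠ w in 𝓝 (f z), DifferentiableAt 𝕜 g w)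
    (hf : ∀ᶠ w in 𝓝 z, DifferentiableAt 𝕜 f w)
    (hg' : DifferentiableAt 𝕜 (deriv g) (f z)) (hf' : DifferentiableAt 𝕜 (deriv f) z) :
    deriv (deriv (g ∘ f)) z =
      deriv (deriv g) (f z) * deriv f z ^ 2 + deriv g (f z) * deriv (deriv f) z := by
  have hg_near : ∀ᶠ w in 𝓝 z, DifferentiableAt 𝕜 g (f w) :=
    hf.self_of_nhds.continuousAt.eventually hg
  have hchain : deriv (g ∘ f) =ᶠ[𝓝 z] fun w => deriv g (f w) * deriv f w := by
    filter_upwards [hg_near, hf] with w hgw hfw using deriv_comp w hgw hfw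
  have hg'f : deriv (fun w => deriv g (f w)) z = deriv (deriv g) (f z) * deriv f z :=
    deriv_comp (h₂ := deriv g) z hg' hf.self_of_nhds
  rw [hchain.deriv_eq, deriv_fun_mul (hg'.fun_comp' z hf.self_of_nhds) hf', hg'f]
  ring

end SecondDerivative

theorem delta1_comp {f g : ℂ → ℂ} {z : ℂ} (y : ℂ) (hf : AnalyticAt ℂ f z)
    (hg : AnalyticAt ℂ g (f z)) (hf0 : deriv f z ≠ 0) (hg0 : deriv g (f z) ≠ 0) :
    delta1 (g ∘ f) (z, y) = delta1 g (liftF f (z, y)) + delta1 f (z, y) := by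
  have hcomp : deriv (g ∘ f) z = deriv g (f z) * deriv f z :=
    deriv_comp z hg.differentiableAt hf.differentiableAt
  simp only [delta1, liftF]
  rw [deriv_deriv_comp (Complex.analyticAt_iff_eventually_differentiableAt.mp hg)
    (Complex.analyticAt_iff_eventually_differentiableAt.mp hf) hg.deriv.differentiableAt
    hf.deriv.differentiableAt, hcomp]
  field_simp

/-- Group 1-cocycle property of δ₁: if ψ₁ : U → V and ψ₂ : V → ℂ are holomorphic with
nowhere vanishing derivatives, then ψ₂∘ψ₁ has nowhere vanishing derivative on U and
δ₁(ψ₂∘ψ₁)(z,y) = δ₁(ψ₂)(Ψ₁(z,y)) + δ₁(ψ₁)(z,y) for every (z,y) ∈ U × ℂ. -/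
theorem stmt4 (U V : Set ℂ) (hU : IsOpen U) (hV : IsOpen V)
    (ψ₁ ψ₂ : ℂ → ℂ) (h₁ : DifferentiableOn ℂ ψ₁ U) (hm : Set.MapsTo ψ₁ U V)
    (h₂ : DifferentiableOn ℂ ψ₂ V)
    (hne₁ : ∀ z ∈ U, deriv ψ₁ z ≠ 0) (hne₂ : ∀ z ∈ V, deriv ψ₂ z ≠ 0) :
    (∀ z ∈ U, deriv (ψ₂ ∘ ψ₁) z ≠ 0) ∧
      ∀ z ∈ U, ∀ y : ℂ,
        delta1 (ψ₂ ∘ ψ₁) (z, y) = delta1 ψ₂ (liftF ψ₁ (z, y)) + delta1 ψ₁ (z, y) := by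
  have ha₁ : AnalyticOnNhd ℂ ψ₁ U := h₁.analyticOnNhd hU
  have ha₂ : AnalyticOnNhd ℂ ψ₂ V := h₂.analyticOnNhd hV
  refine ⟨fun z hz => ?_, fun z hz y => delta1_comp y (ha₁ z hz) (ha₂ _ (hm hz))
    (hne₁ z hz) (hne₂ _ (hm hz))⟩
  rw [deriv_comp z (ha₂ _ (hm hz)).differentiableAt (ha₁ z hz).differentiableAt]
  exact mul_ne_zero (hne₂ _ (hm hz)) (hne₁ z hz)
end
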